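/- Let p be prime and k > 1 not divisible by p, and let O_L be the ring of integers of a totally ramified extension of Q_p of degree e. Then the Waring number g_{O_L}(k) equals the Waring number g_{Z_p}(k). -/

import Mathlib

open Polynomial Finset IsLocalRing

/-! ### Auxiliary lemmas -/

/-- The purely residual Waring-type condition over `ZMod p`. -/
def waringCond (p k g : ℕ) : Prop :=
  ∀ s : ZMod p, ∃ c : Fin g → ZMod p, (∃ i, c i ≠ 0) ∧ s = ∑ i, c i ^ k

section Master

variable {R : Type*} [CommRing R] {p k : ℕ} [Fact p.Prime] {I : Ideal R}
  [HenselianRing R I] {φ : R →+* ZMod p}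

theorem isUnit_mk_of_phi_ne (hker : RingHom.ker φ = I) {z : R} (hz : φ z ≠ 0) :
    IsUnit (Ideal.Quotient.mk I z) := by
  refine IsUnit.of_mul_eq_one (Ideal.Quotient.mk I ((((φ z)⁻¹).val : ℕ) : R)) ?_
  rw [← map_mul, ← map_one (Ideal.Quotient.mk I), Ideal.Quotient.mk_eq_mk_iff_sub_mem, ← hker]
  have : φ (z * (((φ z)⁻¹).val : ℕ) - 1) = 0 := by
    rw [map_sub, map_mul, map_natCast, map_one, ZMod.natCast_val, ZMod.cast_id,
      mul_inv_cancel₀ hz, sub_self]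
  exact this

theorem hensel_pow (hk : 2 ≤ k) (hpk : ¬ p ∣ k) (hker : RingHom.ker φ = I)
    {y : R} {c : ZMod p} (hc : c ≠ 0) (hy : φ y = c ^ k) : ∃ a : R, a ^ k = y := by
  have hk0 : k ≠ 0 := by omega
  have hφa : φ (((c.val : ℕ) : R)) = c := by
    rw [map_natCast, ZMod.natCast_val, ZMod.cast_id]
  obtain ⟨a, ha, -⟩ := HenselianRing.is_henselian (I := I) (X ^ k - C y)
    (monic_X_pow_sub_C y hk0) ((c.val : ℕ) : R)
    (by
      rw [← hker, RingHom.mem_ker]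
      simp only [eval_sub, eval_pow, eval_X, eval_C, map_sub, map_pow, hφa, hy, sub_self])
    (by
      have : (X ^ k - C y).derivative.eval (((c.val : ℕ) : R)) =
          (k : R) * ((c.val : ℕ) : R) ^ (k - 1) := by
        simp [derivative_X_pow]
      rw [this]
      refine isUnit_mk_of_phi_ne hker ?_
      rw [map_mul, map_natCast, map_pow, hφa]
      exact mul_ne_zero (by
        simpa [Ne, ZMod.natCast_eq_zero_iff] using hpk) (pow_ne_zero _ hc))
  refine ⟨a, ?_⟩
  have := ha
  simpa [Polynomial.IsRoot, sub_eq_zero] using this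

theorem exists_rep (hk : 2 ≤ k) (hpk : ¬ p ∣ k) (hker : RingHom.ker φ = I) (x : R) :
    ∃ (j : ℕ) (f : Fin (j + 1) → R), x = ∑ i, f i ^ k := by
  set s : ZMod p := φ x with hs
  set j : ℕ := (s - 1).val with hj
  have hcast : ((j : ℕ) : ZMod p) = s - 1 := by
    rw [hj, ZMod.natCast_val, ZMod.cast_id]
  have h1 : φ (x - (j : R)) = (1 : ZMod p) ^ k := by
    rw [map_sub, map_natCast, hcast, one_pow, ← hs]; ring
  obtain ⟨a, ha⟩ := hensel_pow hk hpk hker one_ne_zero h1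
  refine ⟨j, Fin.cons a (fun _ => 1), ?_⟩
  rw [Fin.sum_univ_succ]
  simp only [Fin.cons_zero, Fin.cons_succ, one_pow]
  rw [ha, Finset.sum_const, Finset.card_univ, Fintype.card_fin, nsmul_eq_mul, mul_one]
  ring

theorem mem_closure_powers (hk : 2 ≤ k) (hpk : ¬ p ∣ k) (hker : RingHom.ker φ = I) (x : R) :
    x ∈ AddSubsemigroup.closure {y : R | ∃ z : R, z ^ k = y} := by
  obtain ⟨j, f, rfl⟩ := exists_rep hk hpk hker x
  clear hker
  induction j with
  | zero =>
      rw [Fin.sum_univ_one]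
      exact AddSubsemigroup.subset_closure ⟨f 0, rfl⟩
  | succ n ih =>
      rw [Fin.sum_univ_succ]
      exact AddSubsemigroup.add_mem _ (AddSubsemigroup.subset_closure ⟨f 0, rfl⟩) (ih _)

theorem master (hk : 2 ≤ k) (hpk : ¬ p ∣ k) (hker : RingHom.ker φ = I)
    {t : R} (ht : t ∈ I) (ht2 : t ∉ I ^ 2) :
    {g | 0 < g ∧ ∀ x ∈ AddSubsemigroup.closure {y : R | ∃ z : R, z ^ k = y},
      ∃ f : Fin g → R, x = ∑ i, f i ^ k} = {g | 0 < g ∧ waringCond p k g} := by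
  ext g
  simp only [Set.mem_setOf_eq, and_congr_right_iff]
  intro _
  constructor
  · intro H s
    by_cases hs : s = 0
    · obtain ⟨f, hf⟩ := H t (mem_closure_powers hk hpk hker t)
      refine ⟨φ ∘ f, ?_, ?_⟩
      · by_contra h
        push_neg at h
        have hfI : ∀ i, f i ∈ I := fun i => by
          have := h i; rw [← hker, RingHom.mem_ker] at *; simpa using this
        refine ht2 ?_
        rw [hf]
        refine Ideal.sum_mem _ fun i _ => ?_
        have h2 : f i ^ 2 ∈ I ^ 2 := Ideal.pow_mem_pow (hfI i) 2
        have : f i ^ k = f i ^ 2 * f i ^ (k - 2) := by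
          rw [← pow_add]; congr 1; omega
        rw [this]
        exact Ideal.mul_mem_right _ _ h2
      · have : φ t = 0 := by rw [← RingHom.mem_ker, hker]; exact ht
        rw [hs, ← this, hf, map_sum]
        simp [map_pow]
    · set x : R := ((s.val : ℕ) : R) with hx
      have hφx : φ x = s := by rw [hx, map_natCast, ZMod.natCast_val, ZMod.cast_id]
      obtain ⟨f, hf⟩ := H x (mem_closure_powers hk hpk hker x)
      refine ⟨φ ∘ f, ?_, ?_⟩
      · by_contra h
        push_neg at h
        refine hs ?_
        have hfI : ∀ i, f i ∈ I := fun i => by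
          have := h i; rw [← hker, RingHom.mem_ker] at *; simpa using this
        have : x ∈ I := by
          rw [hf]
          exact Ideal.sum_mem _ fun i _ => Ideal.pow_mem_of_mem _ (hfI i) _ (by omega)
        rw [← hφx, ← RingHom.mem_ker, hker]
        exact this
      · rw [← hφx, hf, map_sum]; simp [map_pow]
  · intro H x _
    obtain ⟨c, ⟨j, hj⟩, hsum⟩ := H (φ x)
    set a : Fin g → R := fun i => (((c i).val : ℕ) : R) with ha
    have hφa : ∀ i, φ (a i) = c i := fun i => by
      rw [ha]; simp only; rw [map_natCast, ZMod.natCast_val, ZMod.cast_id]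
    set y : R := x - ∑ i ∈ Finset.univ.erase j, a i ^ k with hy
    have hφy : φ y = c j ^ k := by
      have hsplit : (∑ i ∈ Finset.univ.erase j, c i ^ k) + c j ^ k = ∑ i, c i ^ k :=
        Finset.sum_erase_add _ _ (Finset.mem_univ j)
      have : φ y = φ x - ∑ i ∈ Finset.univ.erase j, c i ^ k := by
        rw [hy, map_sub, map_sum]
        simp [map_pow, hφa]
      rw [this, hsum, ← hsplit]; ring
    obtain ⟨b, hb⟩ := hensel_pow hk hpk hker hj hφy
    refine ⟨Function.update a j b, ?_⟩
    rw [← Finset.sum_erase_add _ _ (Finset.mem_univ j), Function.update_self,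
      Finset.sum_congr rfl (fun i hi => by
        rw [Function.update_of_ne (Finset.ne_of_mem_erase hi)]), hb, hy]
    ring

end Master

section Complete

theorem isAdicComplete_of_pow {R : Type*} [CommRing R] {I J : Ideal R} {e : ℕ} (he : 1 ≤ e)
    (hJ : J = I ^ e) (h : IsAdicComplete J R) : IsAdicComplete I R := by
  have hpow : ∀ n : ℕ, J ^ n = I ^ (e * n) := fun n => by rw [hJ, ← pow_mul]
  have hle : ∀ {m n : ℕ}, m ≤ n → (I ^ n • ⊤ : Submodule R R) ≤ I ^ m • ⊤ := fun hmn =>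
    Submodule.smul_mono_left (Ideal.pow_le_pow_right hmn)
  have hH : IsHausdorff I R := ⟨fun x hx => h.toIsHausdorff.haus x fun n => by
    rw [hpow]; exact hx (e * n)⟩
  have hP : IsPrecomplete I R := by
    refine ⟨fun f hf => ?_⟩
    obtain ⟨L, hL⟩ := h.toIsPrecomplete.prec (f := fun n => f (e * n))
      (fun {m n} hmn => by
        rw [hpow]
        exact hf (Nat.mul_le_mul_left e hmn))
    refine ⟨L, fun n => ?_⟩
    have hne : n ≤ e * n := by
      calc n = 1 * n := (one_mul n).symm
        _ ≤ e * n := Nat.mul_le_mul_right n he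
    have h1 : f n ≡ f (e * n) [SMOD I ^ n • (⊤ : Submodule R R)] := hf hne
    have h2 : f (e * n) ≡ L [SMOD I ^ n • (⊤ : Submodule R R)] := by
      refine SModEq.mono (hle hne) ?_
      have := hL n
      rwa [hpow n] at this
    exact h1.trans h2
  exact { toIsHausdorff := hH, toIsPrecomplete := hP }

variable {p : ℕ} [Fact p.Prime] {R : Type*} [CommRing R] [Algebra ℤ_[p] R]
  [Module.Finite ℤ_[p] R] [Module.Free ℤ_[p] R]

theorem mem_span_p_pow_iff {ι : Type*} [Fintype ι] (b : Module.Basis ι ℤ_[p] R) (n : ℕ) (x : R) :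
    x ∈ Ideal.span {(p : R)} ^ n ↔ ∀ i, (p : ℤ_[p]) ^ n ∣ b.equivFun x i := by
  have hps : ∀ y : R, ((p : ℤ_[p]) ^ n) • y = (p : R) ^ n * y := fun y => by
    rw [Algebra.smul_def, map_pow, map_natCast]
  rw [Ideal.span_singleton_pow, Ideal.mem_span_singleton]
  constructor
  · rintro ⟨y, rfl⟩ i
    have : (p : R) ^ n * y = ((p : ℤ_[p]) ^ n) • y := (hps y).symm
    rw [this, map_smul]
    exact ⟨b.equivFun y i, rfl⟩
  · intro h
    choose c hc using h
    refine ⟨∑ i, c i • b i, ?_⟩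
    have hx : x = ∑ i, b.equivFun x i • b i := (b.sum_equivFun x).symm
    calc x = ∑ i, b.equivFun x i • b i := hx
      _ = ∑ i, ((p : ℤ_[p]) ^ n * c i) • b i := by
          exact Finset.sum_congr rfl fun i _ => by rw [hc]
      _ = ((p : ℤ_[p]) ^ n) • ∑ i, c i • b i := by
          rw [Finset.smul_sum]
          exact Finset.sum_congr rfl fun i _ => (mul_smul _ _ _)
      _ = (p : R) ^ n * ∑ i, c i • b i := hps _

theorem isAdicComplete_span_p : IsAdicComplete (Ideal.span {(p : R)}) R := by
  classical
  let b := Module.Free.chooseBasis ℤ_[p] R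
  have hA : IsAdicComplete (maximalIdeal ℤ_[p]) ℤ_[p] := inferInstance
  have hst : ∀ n : ℕ, (Ideal.span {(p : R)} ^ n • ⊤ : Submodule R R) = Ideal.span {(p : R)} ^ n :=
    fun n => by rw [Ideal.smul_eq_mul, Ideal.mul_top]
  have hstA : ∀ n : ℕ, ((maximalIdeal ℤ_[p]) ^ n • ⊤ : Submodule ℤ_[p] ℤ_[p]) =
      (maximalIdeal ℤ_[p]) ^ n := fun n => by rw [Ideal.smul_eq_mul, Ideal.mul_top]
  have hmax : ∀ (n : ℕ) (a : ℤ_[p]), a ∈ (maximalIdeal ℤ_[p]) ^ n ↔ (p : ℤ_[p]) ^ n ∣ a :=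
    fun n a => by
      rw [PadicInt.maximalIdeal_eq_span_p, Ideal.span_singleton_pow, Ideal.mem_span_singleton]
  have hH : IsHausdorff (Ideal.span {(p : R)}) R := by
    refine ⟨fun x hx => ?_⟩
    have hcoord : ∀ i, b.equivFun x i = 0 := by
      intro i
      refine hA.toIsHausdorff.haus _ fun n => ?_
      rw [SModEq.zero, hstA, hmax]
      exact (mem_span_p_pow_iff b n x).mp (by rw [← hst n, ← SModEq.zero]; exact hx n) i
    have : b.equivFun x = 0 := funext hcoord
    have := congrArg b.equivFun.symm this
    rwa [LinearEquiv.symm_apply_apply, map_zero] at this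
  have hP : IsPrecomplete (Ideal.span {(p : R)}) R := by
    refine ⟨fun f hf => ?_⟩
    have hcau : ∀ i, ∀ {m n : ℕ}, m ≤ n →
        b.equivFun (f m) i ≡ b.equivFun (f n) i [SMOD (maximalIdeal ℤ_[p]) ^ m •
          (⊤ : Submodule ℤ_[p] ℤ_[p])] := by
      intro i m n hmn
      rw [SModEq.sub_mem, hstA, hmax]
      have h1 : f m - f n ∈ Ideal.span {(p : R)} ^ m := by
        rw [← hst m, ← SModEq.sub_mem]
        exact hf hmn
      have := (mem_span_p_pow_iff b m _).mp h1 i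
      rwa [map_sub] at this
    have := fun i => hA.toIsPrecomplete.prec (f := fun n => b.equivFun (f n) i) (hcau i)
    choose Lc hLc using this
    refine ⟨b.equivFun.symm Lc, fun n => ?_⟩
    rw [SModEq.sub_mem, hst, mem_span_p_pow_iff b]
    intro i
    have := hLc i n
    rw [SModEq.sub_mem, hstA, hmax] at this
    rwa [map_sub, LinearEquiv.apply_symm_apply]
  exact { toIsHausdorff := hH, toIsPrecomplete := hP }

end Complete

section Count

variable {S : Type*} [CommRing S] [IsDomain S]

theorem card_quot_span_pow_succ (π : S) (hπ : π ≠ 0) (n : ℕ) :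
    Nat.card (S ⧸ Ideal.span {π} ^ (n + 1)) =
      Nat.card (S ⧸ Ideal.span {π} ^ n) * Nat.card (S ⧸ Ideal.span {π}) := by
  set I : Ideal S := Ideal.span {π} with hI
  have hle : I ^ (n + 1) ≤ I ^ n := Ideal.pow_le_pow_right (by omega)
  let ν : (S ⧸ I ^ (n + 1)) →ₗ[S] S ⧸ I ^ n :=
    Submodule.mapQ (I ^ (n + 1)) (I ^ n) LinearMap.id hle
  have hν_surj : Function.Surjective ν := by
    intro x
    obtain ⟨y, rfl⟩ := Submodule.Quotient.mk_surjective _ x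
    exact ⟨Submodule.Quotient.mk y, rfl⟩
  have hmem : ∀ (m : ℕ) (x : S), x ∈ I ^ m ↔ π ^ m ∣ x := fun m x => by
    rw [hI, Ideal.span_singleton_pow, Ideal.mem_span_singleton]
  have hkerf : I = LinearMap.ker
      ((I ^ (n + 1)).mkQ.comp (LinearMap.toSpanSingleton S S (π ^ n))) := by
    ext x
    rw [LinearMap.mem_ker, LinearMap.comp_apply, LinearMap.toSpanSingleton_apply,
      Submodule.mkQ_apply, Submodule.Quotient.mk_eq_zero, hmem, smul_eq_mul]
    constructor
    · intro hx
      obtain ⟨c, rfl⟩ := (hmem 1 x).mp (by rwa [pow_one])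
      exact ⟨c, by ring⟩
    · rintro ⟨c, hc⟩
      have hcancel : π ^ n * x = π ^ n * (π * c) := by
        calc π ^ n * x = x * π ^ n := by ring
          _ = π ^ (n + 1) * c := hc
          _ = π ^ n * (π * c) := by ring
      have := mul_left_cancel₀ (pow_ne_zero n hπ) hcancel
      rw [hI, Ideal.mem_span_singleton]
      exact ⟨c, this⟩
  let μ : (S ⧸ I) →ₗ[S] S ⧸ I ^ (n + 1) := Submodule.liftQ I _ hkerf.le
  have hμ_inj : Function.Injective μ := by
    rw [← LinearMap.ker_eq_bot]
    exact Submodule.ker_liftQ_eq_bot' _ _ hkerf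
  have hrange : LinearMap.range μ = LinearMap.ker ν := by
    ext x
    obtain ⟨y, rfl⟩ := Submodule.Quotient.mk_surjective _ x
    rw [LinearMap.mem_ker]
    have hν : ν (Submodule.Quotient.mk y) = Submodule.Quotient.mk y := rfl
    rw [hν, Submodule.Quotient.mk_eq_zero, hmem]
    constructor
    · rintro ⟨z, hz⟩
      obtain ⟨c, rfl⟩ := Submodule.Quotient.mk_surjective _ z
      have : μ (Submodule.Quotient.mk c) = Submodule.Quotient.mk (c * π ^ n) := by
        simp only [μ, Submodule.liftQ_apply, LinearMap.comp_apply,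
          LinearMap.toSpanSingleton_apply, Submodule.mkQ_apply, smul_eq_mul]
      rw [this] at hz
      have hdiff : y - c * π ^ n ∈ I ^ (n + 1) := by
        rw [← Submodule.Quotient.eq]
        exact hz.symm
      obtain ⟨d, hd⟩ := (hmem (n + 1) _).mp hdiff
      refine ⟨c + π * d, ?_⟩
      have : y = c * π ^ n + π ^ (n + 1) * d := by linear_combination hd
      rw [this]; ring
    · rintro ⟨c, rfl⟩
      refine ⟨Submodule.Quotient.mk c, ?_⟩
      simp only [μ, Submodule.liftQ_apply, LinearMap.comp_apply,
        LinearMap.toSpanSingleton_apply, Submodule.mkQ_apply, smul_eq_mul]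
      rw [mul_comm]
  have e1 : Nat.card (S ⧸ I) = Nat.card (LinearMap.ker ν) :=
    Nat.card_congr ((LinearEquiv.ofInjective μ hμ_inj).trans
      (LinearEquiv.ofEq _ _ hrange)).toEquiv
  have e2 : Nat.card ((S ⧸ I ^ (n + 1)) ⧸ LinearMap.ker ν) = Nat.card (S ⧸ I ^ n) :=
    Nat.card_congr (ν.quotKerEquivOfSurjective hν_surj).toEquiv
  have e3 := Submodule.card_eq_card_quotient_mul_card (LinearMap.ker ν)
  rw [e3, e2, ← e1, mul_comm]

end Count

/-- The Waring number `g_R(k)`: the least positive integer `g` such that every element of the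
additive semigroup generated by the `k`-th powers of `R` is a sum of at most `g` `k`-th powers. -/
noncomputable def waringNumber (R : Type*) [CommRing R] (k : ℕ) : ℕ :=
  sInf {g | 0 < g ∧ ∀ x ∈ AddSubsemigroup.closure {y : R | ∃ z : R, z ^ k = y},
    ∃ f : Fin g → R, x = ∑ i, f i ^ k}

set_option maxHeartbeats 1000000 in
set_option synthInstance.maxHeartbeats 400000 in
/-- Let `p` be prime, `k > 1` not divisible by `p`, and `𝒪_L` the ring of integers of a
totally ramified finite extension `L` of `ℚ_[p]` of degree `e` (total ramification: some
uniformizer `π` satisfies `p ~ π ^ e`).  Then `g_{𝒪_L}(k) = g_{ℤ_p}(k)`. -/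
theorem waring_totally_ramified (p : ℕ) [Fact p.Prime] (k : ℕ) (hk : 1 < k) (hpk : ¬ p ∣ k)
    (L : Type*) [Field L] [Algebra ℚ_[p] L] [FiniteDimensional ℚ_[p] L]
    [Algebra ℤ_[p] L] [IsScalarTower ℤ_[p] ℚ_[p] L]
    (e : ℕ) (he : Module.finrank ℚ_[p] L = e)
    (hram : ∃ π : integralClosure ℤ_[p] L, Irreducible π ∧
      Associated ((p : integralClosure ℤ_[p] L)) (π ^ e)) :
    waringNumber (integralClosure ℤ_[p] L) k = waringNumber ℤ_[p] k := by
  obtain ⟨π, hπirr, hassoc⟩ := hram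
  have hk2 : 2 ≤ k := hk
  -- basic instances
  haveI : Module.IsTorsionFree ℤ_[p] L :=
    (Module.isTorsionFree_iff_algebraMap_injective (R := ℤ_[p]) (A := L)).mpr (by
      rw [IsScalarTower.algebraMap_eq ℤ_[p] ℚ_[p] L]
      exact (algebraMap ℚ_[p] L).injective.comp (IsFractionRing.injective ℤ_[p] ℚ_[p]))
  haveI : Module.Finite ℤ_[p] (integralClosure ℤ_[p] L) :=
    IsIntegralClosure.finite ℤ_[p] ℚ_[p] L (integralClosure ℤ_[p] L)
  haveI : Module.Free ℤ_[p] (integralClosure ℤ_[p] L) :=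
    IsIntegralClosure.module_free ℤ_[p] ℚ_[p] L (integralClosure ℤ_[p] L)
  have hrank : Module.finrank ℤ_[p] (integralClosure ℤ_[p] L) = e :=
    (IsIntegralClosure.rank ℤ_[p] ℚ_[p] L (integralClosure ℤ_[p] L)).trans he
  have he1 : 1 ≤ e := by
    rw [← he]
    exact Module.finrank_pos
  have hπ0 : π ≠ 0 := hπirr.ne_zero
  have hπu : ¬ IsUnit π := hπirr.not_isUnit
  set I : Ideal (integralClosure ℤ_[p] L) := Ideal.span {π} with hIdef
  have hsp : Ideal.span {(p : integralClosure ℤ_[p] L)} = I ^ e := by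
    rw [hIdef, Ideal.span_singleton_pow, Ideal.span_singleton_eq_span_singleton]
    exact hassoc
  have hpS : Ideal.map (algebraMap ℤ_[p] (integralClosure ℤ_[p] L)) (maximalIdeal ℤ_[p]) =
      Ideal.span {(p : integralClosure ℤ_[p] L)} := by
    rw [PadicInt.maximalIdeal_eq_span_p, Ideal.map_span, Set.image_singleton, map_natCast]
  -- the residue field of ℤ_[p] has cardinality p
  have hκequiv : (ℤ_[p] ⧸ maximalIdeal ℤ_[p]) ≃+* ZMod p := by
    have hsurj : Function.Surjective (PadicInt.toZMod (p := p)) := fun s =>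
      ⟨((s.val : ℕ) : ℤ_[p]), by rw [map_natCast, ZMod.natCast_val, ZMod.cast_id]⟩
    exact (Ideal.quotEquivOfEq PadicInt.ker_toZMod.symm).trans
      (RingHom.quotientKerEquivOfSurjective hsurj)
  have hκcard : Nat.card (ℤ_[p] ⧸ maximalIdeal ℤ_[p]) = p := by
    rw [Nat.card_congr hκequiv.toEquiv, Nat.card_zmod]
  -- cardinality of R ⧸ span {p}
  have hcardJ : Nat.card ((integralClosure ℤ_[p] L) ⧸
      Ideal.map (algebraMap ℤ_[p] (integralClosure ℤ_[p] L)) (maximalIdeal ℤ_[p])) = p ^ e := by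
    classical
    let b := Module.Free.chooseBasis ℤ_[p] (integralClosure ℤ_[p] L)
    let bq := IsLocalRing.basisQuotient (R := ℤ_[p]) (S := integralClosure ℤ_[p] L) b
    have h1 := Nat.card_congr bq.equivFun.toEquiv
    have h2 : Fintype.card (Module.Free.ChooseBasisIndex ℤ_[p] (integralClosure ℤ_[p] L)) = e := by
      rw [← Module.finrank_eq_card_chooseBasisIndex, hrank]
    rw [h1, Nat.card_fun, hκcard, Nat.card_eq_fintype_card, h2]
  -- the filtration count
  have hcount : ∀ n : ℕ, Nat.card ((integralClosure ℤ_[p] L) ⧸ I ^ (n + 1)) =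
      Nat.card ((integralClosure ℤ_[p] L) ⧸ I) ^ (n + 1) := by
    intro n
    induction n with
    | zero =>
        rw [hIdef, card_quot_span_pow_succ π hπ0 0, pow_one]
        have h0 : Nat.card ((integralClosure ℤ_[p] L) ⧸ Ideal.span {π} ^ 0) = 1 := by
          rw [pow_zero]
          have : Subsingleton ((integralClosure ℤ_[p] L) ⧸ (1 : Ideal (integralClosure ℤ_[p] L))) := by
            rw [Ideal.one_eq_top]
            infer_instance
          exact Nat.card_of_subsingleton 0
        rw [h0, one_mul]
    | succ m ih =>
        rw [hIdef, card_quot_span_pow_succ π hπ0 (m + 1), ← hIdef, ih, ← pow_succ]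
  have hcardI : Nat.card ((integralClosure ℤ_[p] L) ⧸ I) = p := by
    refine Nat.pow_left_injective (n := e) (by omega) ?_
    show Nat.card ((integralClosure ℤ_[p] L) ⧸ I) ^ e = p ^ e
    obtain ⟨e', rfl⟩ : ∃ e', e = e' + 1 := ⟨e - 1, by omega⟩
    rw [← hcount e', ← hcardJ]
    exact (Nat.card_congr (Ideal.quotEquivOfEq (by rw [hpS, hsp])).toEquiv).symm
  -- residue field of R is ZMod p
  have hpI : (p : integralClosure ℤ_[p] L) ∈ I := by
    have h1 : (p : integralClosure ℤ_[p] L) ∈ Ideal.span {(p : integralClosure ℤ_[p] L)} :=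
      Ideal.mem_span_singleton_self _
    rw [hsp] at h1
    exact Ideal.pow_le_self (by omega) h1
  haveI : Nontrivial ((integralClosure ℤ_[p] L) ⧸ I) := by
    refine Ideal.Quotient.nontrivial_iff.mpr ?_
    rw [hIdef, Ne, Ideal.span_singleton_eq_top]
    exact hπu
  haveI : CharP ((integralClosure ℤ_[p] L) ⧸ I) p :=
    (CharP.charP_iff_prime_eq_zero (Fact.out : p.Prime)).mpr (by
      rw [← map_natCast (Ideal.Quotient.mk I), Ideal.Quotient.eq_zero_iff_mem]
      exact hpI)
  haveI : Finite ((integralClosure ℤ_[p] L) ⧸ I) :=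
    Nat.finite_of_card_ne_zero (by rw [hcardI]; exact (Fact.out : p.Prime).ne_zero)
  have hbij : Function.Bijective (ZMod.castHom (dvd_refl p) ((integralClosure ℤ_[p] L) ⧸ I)) := by
    rw [Nat.bijective_iff_injective_and_card]
    exact ⟨(ZMod.castHom (dvd_refl p) ((integralClosure ℤ_[p] L) ⧸ I)).injective,
      by rw [Nat.card_zmod, hcardI]⟩
  set eqv : ZMod p ≃+* ((integralClosure ℤ_[p] L) ⧸ I) := RingEquiv.ofBijective _ hbij with heqv
  set φR : (integralClosure ℤ_[p] L) →+* ZMod p :=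
    ((eqv.symm : ((integralClosure ℤ_[p] L) ⧸ I) ≃+* ZMod p) :
      ((integralClosure ℤ_[p] L) ⧸ I) →+* ZMod p).comp (Ideal.Quotient.mk I) with hφR
  have hkerR : RingHom.ker φR = I := by
    ext x
    rw [RingHom.mem_ker, hφR, RingHom.comp_apply]
    constructor
    · intro h
      have h0 : eqv.symm (Ideal.Quotient.mk I x) = eqv.symm 0 := by rw [map_zero]; exact h
      have := eqv.symm.injective h0
      rwa [Ideal.Quotient.eq_zero_iff_mem] at this
    · intro h
      rw [RingEquiv.coe_toRingHom, Ideal.Quotient.eq_zero_iff_mem.mpr h, map_zero]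
  -- Henselian property
  haveI : IsAdicComplete (Ideal.span {(p : integralClosure ℤ_[p] L)}) (integralClosure ℤ_[p] L) :=
    isAdicComplete_span_p
  haveI : IsAdicComplete I (integralClosure ℤ_[p] L) := isAdicComplete_of_pow he1 hsp ‹_›
  haveI : HenselianRing (integralClosure ℤ_[p] L) I := inferInstance
  -- the uniformizer is in I but not I ^ 2
  have hπI : π ∈ I := Ideal.mem_span_singleton_self π
  have hπI2 : π ∉ I ^ 2 := by
    rw [hIdef, Ideal.span_singleton_pow, Ideal.mem_span_singleton]
    rintro ⟨c, hc⟩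
    have hcancel : π * 1 = π * (π * c) := by
      rw [mul_one]
      calc π = π ^ 2 * c := hc
        _ = π * (π * c) := by ring
    have h1 : (1 : integralClosure ℤ_[p] L) = π * c := mul_left_cancel₀ hπ0 hcancel
    exact hπu (IsUnit.of_mul_eq_one c h1.symm)
  -- ℤ_[p] side data
  have hp0 : (p : ℤ_[p]) ≠ 0 := Nat.cast_ne_zero.mpr (Fact.out : p.Prime).ne_zero
  have hpu : ¬ IsUnit (p : ℤ_[p]) := by
    intro h
    have := Ideal.span_singleton_eq_top.mpr h
    rw [← PadicInt.maximalIdeal_eq_span_p] at this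
    exact Ideal.IsMaximal.ne_top inferInstance this
  have hpZ1 : (p : ℤ_[p]) ∈ maximalIdeal ℤ_[p] := by
    rw [PadicInt.maximalIdeal_eq_span_p]
    exact Ideal.mem_span_singleton_self _
  have hpZ2 : (p : ℤ_[p]) ∉ (maximalIdeal ℤ_[p]) ^ 2 := by
    rw [PadicInt.maximalIdeal_eq_span_p, Ideal.span_singleton_pow, Ideal.mem_span_singleton]
    rintro ⟨c, hc⟩
    have hcancel : (p : ℤ_[p]) * 1 = (p : ℤ_[p]) * ((p : ℤ_[p]) * c) := by
      rw [mul_one]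
      calc (p : ℤ_[p]) = (p : ℤ_[p]) ^ 2 * c := hc
        _ = (p : ℤ_[p]) * ((p : ℤ_[p]) * c) := by ring
    have h1 : (1 : ℤ_[p]) = (p : ℤ_[p]) * c := mul_left_cancel₀ hp0 hcancel
    exact hpu (IsUnit.of_mul_eq_one c h1.symm)
  -- conclude
  unfold waringNumber
  rw [master hk2 hpk hkerR hπI hπI2,
    master hk2 hpk (PadicInt.ker_toZMod (p := p)) hpZ1 hpZ2]
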